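/- Let π: 𝒳 → X be the coarse moduli map of a tame Deligne–Mumford stack, ℋ a locally free sheaf on 𝒳, and F_ℋ(𝓕) = π_* Hom(ℋ, 𝓕), G_ℋ(F) = π*F ⊗ ℋ. Let γ: 𝒢 → 𝓕 be a surjection of coherent sheaves with kernel 𝒦 such that the adjunction map θ_ℋ(𝒦): G_ℋ(F_ℋ(𝒦)) → 𝒦 is surjective. Then γ can be recovered from F_ℋ(γ): namely, γ is the cokernel of the composition π*(F_ℋ(𝒦)) ⊗ ℋ → G_ℋ(F_ℋ(𝒢)) → 𝒢. Consequently, the map [γ] ↦ [F_ℋ(γ)] from quotients of 𝒢 with this property to quotients of F_ℋ(𝒢) is injective. -/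
import Mathlib


open CategoryTheory Limits

lemma FH_counit_nat {C D : Type*} [Category C] [Category D] [Abelian C] [Abelian D]
    (FH : C ⥤ D) (GH : D ⥤ C) (adj : GH ⊣ FH)
    {𝒢 𝓕 : C} (γ : 𝒢 ⟶ 𝓕) :
    GH.map (FH.map (kernel.ι γ)) ≫ adj.counit.app 𝒢
      = adj.counit.app (kernel γ) ≫ kernel.ι γ :=
  adj.counit.naturality (kernel.ι γ)

/-- The key half: `γ` is the cokernel of `GH(FH(ker ι)) ≫ counit`. -/
noncomputable def isColimitAux {C D : Type*} [Category C] [Category D] [Abelian C] [Abelian D]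
    (FH : C ⥤ D) (GH : D ⥤ C) (adj : GH ⊣ FH)
    {𝒢 𝓕 : C} (γ : 𝒢 ⟶ 𝓕) [Epi γ]
    (hθ : Epi (adj.counit.app (kernel γ)))
    (w : (GH.map (FH.map (kernel.ι γ)) ≫ adj.counit.app 𝒢) ≫ γ = 0) :
    IsColimit (CokernelCofork.ofπ γ w) := by
  have h1 := Abelian.epiIsCokernelOfKernel
    (KernelFork.ofι (kernel.ι γ) (kernel.condition γ)) (kernelIsKernel γ)
  exact isCokernelEpiComp h1 (adj.counit.app (kernel γ))
    (FH_counit_nat FH GH adj γ)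

/-- Lemma 3.9: let `F_ℋ : QCoh(𝒳) → QCoh(X)` be the exact functor
`𝓕 ↦ π_* Hom(ℋ, 𝓕)` with left adjoint `G_ℋ : F ↦ π*F ⊗ ℋ` and counit `θ_ℋ`
(modeled: `C, D` abelian categories, `G_ℋ ⊣ F_ℋ`, `F_ℋ` exact).  Let `γ : 𝒢 ⟶ 𝓕`
be a surjection with kernel `𝒦` such that `θ_ℋ(𝒦)` is surjective.  Then `γ` is the
cokernel of `G_ℋ(F_ℋ(𝒦)) → G_ℋ(F_ℋ(𝒢)) → 𝒢`; consequently `[γ] ↦ [F_ℋ(γ)]` is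
injective on such quotients of `𝒢`. -/
theorem quotient_recovered_from_FH
    {C D : Type*} [Category C] [Category D] [Abelian C] [Abelian D]
    (FH : C ⥤ D) (GH : D ⥤ C) (adj : GH ⊣ FH)
    [PreservesFiniteLimits FH] [PreservesFiniteColimits FH]
    {𝒢 𝓕 : C} (γ : 𝒢 ⟶ 𝓕) [Epi γ]
    (hθ : Epi (adj.counit.app (kernel γ))) :
    (∃ w : (GH.map (FH.map (kernel.ι γ)) ≫ adj.counit.app 𝒢) ≫ γ = 0,
      Nonempty (IsColimit (CokernelCofork.ofπ γ w))) ∧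
    ∀ {𝓕' : C} (γ' : 𝒢 ⟶ 𝓕'), Epi γ' → Epi (adj.counit.app (kernel γ')) →
      ∀ e : FH.obj 𝓕 ≅ FH.obj 𝓕', FH.map γ ≫ e.hom = FH.map γ' →
        ∃ e' : 𝓕 ≅ 𝓕', γ ≫ e'.hom = γ' := by
  have w : (GH.map (FH.map (kernel.ι γ)) ≫ adj.counit.app 𝒢) ≫ γ = 0 := by
    rw [FH_counit_nat FH GH adj γ, Category.assoc, kernel.condition, comp_zero]
  refine ⟨⟨w, ⟨isColimitAux FH GH adj γ hθ w⟩⟩, ?_⟩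
  intro 𝓕' γ' hγ' hθ' e he
  -- compare kernels of `FH.map γ` and `FH.map γ'`
  have hι : kernel.ι (FH.map γ) ≫ FH.map γ' = 0 := by
    rw [← he, ← Category.assoc, kernel.condition, zero_comp]
  have hι' : kernel.ι (FH.map γ') ≫ FH.map γ = 0 := by
    have : (kernel.ι (FH.map γ') ≫ FH.map γ) ≫ e.hom = 0 := by
      rw [Category.assoc, he, kernel.condition]
    exact (cancel_mono e.hom).mp (by rw [this, zero_comp])
  let u : kernel (FH.map γ) ⟶ kernel (FH.map γ') := kernel.lift _ (kernel.ι _) hι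
  let v : kernel (FH.map γ') ⟶ kernel (FH.map γ) := kernel.lift _ (kernel.ι _) hι'
  have huv : IsIso u := by
    refine ⟨v, ?_, ?_⟩
    · rw [← cancel_mono (kernel.ι (FH.map γ))]; simp [u, v]
    · rw [← cancel_mono (kernel.ι (FH.map γ'))]; simp [u, v]
  let φ : FH.obj (kernel γ) ⟶ FH.obj (kernel γ') :=
    kernelComparison γ FH ≫ u ≫ inv (kernelComparison γ' FH)
  have hφiso : IsIso φ := by
    have := huv
    apply IsIso.comp_isIso
  have hφ : φ ≫ FH.map (kernel.ι γ') = FH.map (kernel.ι γ) := by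
    have h1 : inv (kernelComparison γ' FH) ≫ FH.map (kernel.ι γ')
        = kernel.ι (FH.map γ') := by
      rw [IsIso.inv_comp_eq, kernelComparison_comp_ι]
    simp only [φ, Category.assoc, h1]
    have h2 : u ≫ kernel.ι (FH.map γ') = kernel.ι (FH.map γ) := kernel.lift_ι _ _ _
    rw [h2, kernelComparison_comp_ι]
  -- `γ'` is the cokernel of the same morphism as `γ`
  have w' : (GH.map (FH.map (kernel.ι γ')) ≫ adj.counit.app 𝒢) ≫ γ' = 0 := by
    rw [FH_counit_nat FH GH adj γ', Category.assoc, kernel.condition, comp_zero]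
  have hc' : IsColimit (CokernelCofork.ofπ γ' w') := isColimitAux FH GH adj γ' hθ' w'
  have hGφ : Epi (GH.map φ) := by
    have : IsIso (GH.map φ) := by have := hφiso; infer_instance
    infer_instance
  have hh : GH.map (FH.map (kernel.ι γ)) ≫ adj.counit.app 𝒢
      = GH.map φ ≫ (GH.map (FH.map (kernel.ι γ')) ≫ adj.counit.app 𝒢) := by
    rw [← Category.assoc, ← GH.map_comp, hφ]
  have hc2 : IsColimit (CokernelCofork.ofπ γ'
      (by rw [hh]; simp [w'] : (GH.map (FH.map (kernel.ι γ)) ≫ adj.counit.app 𝒢) ≫ γ' = 0)) :=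
    isCokernelEpiComp hc' (GH.map φ) hh
  have hc : IsColimit (CokernelCofork.ofπ γ w) := isColimitAux FH GH adj γ hθ w
  refine ⟨hc.coconePointUniqueUpToIso hc2, ?_⟩
  exact hc.comp_coconePointUniqueUpToIso_hom hc2 WalkingParallelPair.one
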